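/- Let G and G' be two simple graphs on the same vertex set V and let U be the Boolean sum of G and G'. Then G and G' have the same 3-element homogeneous subsets if and only if for all pairwise distinct vertices x, y, z of V: whenever U(xy) = U(xz) ≠ U(yz) (i.e. xy and xz have the same U-adjacency status, different from that of yz), the pairs xy and xz have different adjacency status in G (xy ∈ E(G) if and only if xz ∉ E(G)). -/

import Mathlib

open SimpleGraph

/-- The Boolean sum `G ∔ G'`: edges are the symmetric difference of the edge sets. -/
def booleanSum {V : Type*} (G G' : SimpleGraph V) : SimpleGraph V where
  Adj x y := (G.Adj x y ∧ ¬ G'.Adj x y) ∨ (G'.Adj x y ∧ ¬ G.Adj x y)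
  symm := ⟨by
    rintro x y (⟨h1, h2⟩ | ⟨h1, h2⟩)
    · exact Or.inl ⟨h1.symm, fun h => h2 h.symm⟩
    · exact Or.inr ⟨h1.symm, fun h => h2 h.symm⟩⟩
  loopless := ⟨by
    rintro x (⟨h, -⟩ | ⟨h, -⟩)
    · exact G.irrefl h
    · exact G'.irrefl h⟩
/-- Two graphs on the same vertex set have the same 3-element homogeneous subsets:
a 3-element set is a clique or an independent set of `G` iff it is one of `G'`. -/
def SameHomog3 {V : Type*} (G G' : SimpleGraph V) : Prop :=
  ∀ s : Finset V, s.card = 3 →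
    ((G.IsClique ↑s ∨ Gᶜ.IsClique ↑s) ↔ (G'.IsClique ↑s ∨ G'ᶜ.IsClique ↑s))

lemma prop_fwd (a b c a' b' c' : Prop) (ua ub uc : Prop)
    (ha : ua ↔ ((a ∧ ¬a') ∨ (a' ∧ ¬a))) (hb : ub ↔ ((b ∧ ¬b') ∨ (b' ∧ ¬b)))
    (hc : uc ↔ ((c ∧ ¬c') ∨ (c' ∧ ¬c)))
    (h : ((a ∧ b ∧ c) ∨ (¬a ∧ ¬b ∧ ¬c)) ↔ ((a' ∧ b' ∧ c') ∨ (¬a' ∧ ¬b' ∧ ¬c')))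
    (h2 : (ua ↔ ub) ∧ ¬(ua ↔ uc)) : ¬(a ↔ b) := by
  rw [ha, hb, hc] at *
  by_cases a <;> by_cases b <;> by_cases c <;> by_cases a' <;> by_cases b' <;> by_cases c' <;>
    simp_all

lemma prop_bwd (a b c a' b' c' : Prop) (ua ub uc : Prop)
    (ha : ua ↔ ((a ∧ ¬a') ∨ (a' ∧ ¬a))) (hb : ub ↔ ((b ∧ ¬b') ∨ (b' ∧ ¬b)))
    (hc : uc ↔ ((c ∧ ¬c') ∨ (c' ∧ ¬c)))
    (h1 : (ua ↔ ub) ∧ ¬(ua ↔ uc) → ¬(a ↔ b))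
    (h2 : (uc ↔ ua) ∧ ¬(uc ↔ ub) → ¬(c ↔ a))
    (h3 : (ub ↔ uc) ∧ ¬(ub ↔ ua) → ¬(b ↔ c)) :
    ((a ∧ b ∧ c) ∨ (¬a ∧ ¬b ∧ ¬c)) ↔ ((a' ∧ b' ∧ c') ∨ (¬a' ∧ ¬b' ∧ ¬c')) := by
  rw [ha, hb, hc] at *
  by_cases a <;> by_cases b <;> by_cases c <;> by_cases a' <;> by_cases b' <;> by_cases c' <;>
    simp_all

lemma clique3 {V : Type*} (G : SimpleGraph V) {x y z : V} (hxy : x ≠ y) (hxz : x ≠ z)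
    (hyz : y ≠ z) : G.IsClique {x, y, z} ↔ G.Adj x y ∧ G.Adj x z ∧ G.Adj y z := by
  constructor
  · intro h
    exact ⟨h (by simp) (by simp) hxy, h (by simp) (by simp) hxz, h (by simp) (by simp) hyz⟩
  · rintro ⟨h1, h2, h3⟩
    intro u hu v hv huv
    simp only [Set.mem_insert_iff, Set.mem_singleton_iff] at hu hv
    rcases hu with rfl|rfl|rfl <;> rcases hv with rfl|rfl|rfl <;>
      first | exact absurd rfl huv | assumption | exact h1.symm | exact h2.symm | exact h3.symm

lemma compl_clique3 {V : Type*} (G : SimpleGraph V) {x y z : V} (hxy : x ≠ y) (hxz : x ≠ z)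
    (hyz : y ≠ z) : Gᶜ.IsClique {x, y, z} ↔ ¬G.Adj x y ∧ ¬G.Adj x z ∧ ¬G.Adj y z := by
  rw [clique3 Gᶜ hxy hxz hyz]
  simp [compl_adj, hxy, hxz, hyz]

/-- Lemma 5, (a) ⇔ (b): `G` and `G'` have the same 3-element homogeneous subsets iff for all
pairwise distinct `x, y, z`, whenever `U(xy) = U(xz) ≠ U(yz)` one has `G(xy) ≠ G(xz)`,
where `U` is the Boolean sum of `G` and `G'`. -/
theorem stmt_7 {V : Type*} (G G' : SimpleGraph V) (U : SimpleGraph V)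
    (hU : U = booleanSum G G') :
    SameHomog3 G G' ↔
      ∀ x y z : V, x ≠ y → x ≠ z → y ≠ z →
        ((U.Adj x y ↔ U.Adj x z) ∧ ¬ (U.Adj x y ↔ U.Adj y z)) →
        ¬ (G.Adj x y ↔ G.Adj x z) := by
  subst hU
  classical
  constructor
  · intro h x y z hxy hxz hyz h2
    have hs := h {x, y, z} (Finset.card_eq_three.mpr ⟨x, y, z, hxy, hxz, hyz, rfl⟩)
    simp only [Finset.coe_insert, Finset.coe_singleton] at hs
    rw [clique3 G hxy hxz hyz, clique3 G' hxy hxz hyz, compl_clique3 G hxy hxz hyz,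
      compl_clique3 G' hxy hxz hyz] at hs
    exact prop_fwd (G.Adj x y) (G.Adj x z) (G.Adj y z) (G'.Adj x y) (G'.Adj x z) (G'.Adj y z)
      _ _ _ Iff.rfl Iff.rfl Iff.rfl hs h2
  · intro h s hs
    obtain ⟨x, y, z, hxy, hxz, hyz, hseq⟩ := Finset.card_eq_three.mp hs
    subst hseq
    have h1 := h x y z hxy hxz hyz
    have h2 := h y z x hyz hxy.symm hxz.symm
    have h3 := h z x y hxz.symm hyz.symm hxy
    rw [(booleanSum G G').adj_comm y x, (booleanSum G G').adj_comm z x,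
      G.adj_comm y x] at h2
    rw [(booleanSum G G').adj_comm z x, (booleanSum G G').adj_comm z y,
      G.adj_comm z x, G.adj_comm z y] at h3
    simp only [Finset.coe_insert, Finset.coe_singleton]
    rw [clique3 G hxy hxz hyz, clique3 G' hxy hxz hyz, compl_clique3 G hxy hxz hyz,
      compl_clique3 G' hxy hxz hyz]
    exact prop_bwd (G.Adj x y) (G.Adj x z) (G.Adj y z) (G'.Adj x y) (G'.Adj x z) (G'.Adj y z)
      _ _ _ Iff.rfl Iff.rfl Iff.rfl h1 h2 h3
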